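/- For every integer m ≥ 1 and every x ∈ ℝ, one has (x² + m)^{−1/2} > V_m(x) > (x² + m + 1)^{−1/2}; and for m = 0 and every x ≠ 0, one has 1/|x| > V_0(x) > (x² + 1)^{−1/2}. -/

import Mathlib

open MeasureTheory

/-- The regularized Coulomb potential
`V_m(x) = (1/m!) ∫₀^∞ u^m e^{−u} (x² + u)^{−1/2} du`. -/
noncomputable def Vm (m : ℕ) (x : ℝ) : ℝ :=
  (1 / (m.factorial : ℝ)) *
    ∫ u in Set.Ioi (0 : ℝ), u ^ m * Real.exp (-u) / Real.sqrt (x ^ 2 + u)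

/-!
`V_m(x)` is the mean of `(x² + u)^{-1/2}` under the Gamma weight `u^m e^{-u} / m!`, whose mean
is `m + 1`. Both bounds are strict Jensen inequalities: a tangent line at the mean integrates to
its value there, and the function lies strictly on one side of it elsewhere. The lower bound uses
the convexity of `u ↦ (x² + u)^{-1/2}`. For the upper bound with `m = k + 1`, write
`u^{k+1} e^{-u} (x² + u)^{-1/2} = u^k e^{-u} · u (x² + u)^{-1/2}`: this is `k + 1` times the
mean of the concave `u ↦ u (x² + u)^{-1/2}` under the weight of index `k`, whose mean is `m`.
For `m = 0` the upper bound is just `(x² + u)^{-1/2} < 1/|x|` for `u > 0`.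
-/

open Set Real

theorem setIntegral_lt_setIntegral_of_le_of_lt {X : Type*} [MeasurableSpace X] {μ : Measure X}
    {s t : Set X} {f g : X → ℝ} (hs : MeasurableSet s) (hf : IntegrableOn f s μ)
    (hg : IntegrableOn g s μ) (hle : ∀ x ∈ s, f x ≤ g x) (hts : t ⊆ s) (ht : μ t ≠ 0)
    (hlt : ∀ x ∈ t, f x < g x) :
    ∫ x in s, f x ∂μ < ∫ x in s, g x ∂μ := by
  rw [← sub_pos, ← integral_sub hg hf, setIntegral_pos_iff_support_of_nonneg_ae
    ((ae_restrict_iff' hs).2 (.of_forall fun x hx => sub_nonneg.2 (hle x hx))) (hg.sub hf)]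
  exact (pos_iff_ne_zero.2 ht).trans_le <| measure_mono fun x hx =>
    ⟨Function.mem_support.2 (sub_pos.2 (hlt x hx)).ne', hts hx⟩

lemma integrableOn_pow_mul_exp_neg (k : ℕ) :
    IntegrableOn (fun u : ℝ => u ^ k * exp (-u)) (Ioi 0) := by
  refine (GammaIntegral_convergent (s := k + 1) (by positivity)).congr_fun
    (fun u _ => ?_) measurableSet_Ioi
  simp [mul_comm]

lemma integral_pow_mul_exp_neg (k : ℕ) :
    ∫ u in Ioi (0 : ℝ), u ^ k * exp (-u) = k.factorial := by
  rw [← Gamma_nat_eq_factorial, Gamma_eq_integral (by positivity)]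
  simp [mul_comm]

lemma integrableOn_pow_mul_exp_neg_mul (k : ℕ) {g : ℝ → ℝ} (C : ℝ) (hg : Measurable g)
    (hbound : ∀ u ∈ Ioi (0 : ℝ), |g u| ≤ C * (1 + u)) :
    IntegrableOn (fun u : ℝ => u ^ k * exp (-u) * g u) (Ioi 0) := by
  have hρ := (integrableOn_pow_mul_exp_neg k).add (integrableOn_pow_mul_exp_neg (k + 1))
  refine (hρ.const_mul C).mono' (by fun_prop)
    ((ae_restrict_iff' measurableSet_Ioi).2 (.of_forall fun u hu => ?_))
  have hu : 0 < u := hu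
  calc ‖u ^ k * exp (-u) * g u‖ = u ^ k * exp (-u) * |g u| := by
        rw [Real.norm_eq_abs, abs_mul, abs_of_pos (by positivity)]
    _ ≤ u ^ k * exp (-u) * (C * (1 + u)) := by gcongr; exact hbound u hu
    _ = C * (u ^ k * exp (-u) + u ^ (k + 1) * exp (-u)) := by ring

lemma factorial_mul_lt_integral_of_tangent_lt (k : ℕ) {g : ℝ → ℝ} (c : ℝ)
    (hint : IntegrableOn (fun u : ℝ => u ^ k * exp (-u) * g u) (Ioi 0))
    (htan : ∀ u : ℝ, 0 < u → u ≠ k + 1 → g (k + 1) + c * (u - (k + 1)) < g u) :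
    k.factorial * g (k + 1) < ∫ u in Ioi (0 : ℝ), u ^ k * exp (-u) * g u := by
  have hρ := integrableOn_pow_mul_exp_neg k
  have hρ' := integrableOn_pow_mul_exp_neg (k + 1)
  have hsplit : ∀ u : ℝ, u ^ k * exp (-u) * (g (k + 1) + c * (u - (k + 1)))
      = (g (k + 1) - c * (k + 1)) * (u ^ k * exp (-u)) + c * (u ^ (k + 1) * exp (-u)) := by
    intro u; ring
  have hline : ∫ u in Ioi (0 : ℝ), u ^ k * exp (-u) * (g (k + 1) + c * (u - (k + 1)))
      = k.factorial * g (k + 1) := by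
    simp only [hsplit]
    rw [integral_add (hρ.const_mul _) (hρ'.const_mul _), integral_const_mul, integral_const_mul,
      integral_pow_mul_exp_neg, integral_pow_mul_exp_neg, Nat.factorial_succ]
    push_cast
    ring
  rw [← hline]
  refine setIntegral_lt_setIntegral_of_le_of_lt (t := Ioo (0 : ℝ) (k + 1)) measurableSet_Ioi ?_
    hint ?_ Ioo_subset_Ioi_self (Measure.measure_Ioo_pos _ |>.2 (by positivity)).ne' ?_
  · simp only [hsplit]
    exact (hρ.const_mul _).add (hρ'.const_mul _)
  · intro u hu
    rcases eq_or_ne u (k + 1) with rfl | hne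
    · simp
    · exact mul_le_mul_of_nonneg_left (htan u hu hne).le (by have : (0 : ℝ) < u := hu; positivity)
  · intro u hu
    exact mul_lt_mul_of_pos_left (htan u hu.1 hu.2.ne) (by have := hu.1; positivity)

lemma integral_lt_factorial_mul_of_lt_tangent (k : ℕ) {g : ℝ → ℝ} (c : ℝ)
    (hint : IntegrableOn (fun u : ℝ => u ^ k * exp (-u) * g u) (Ioi 0))
    (htan : ∀ u : ℝ, 0 < u → u ≠ k + 1 → g u < g (k + 1) + c * (u - (k + 1))) :
    ∫ u in Ioi (0 : ℝ), u ^ k * exp (-u) * g u < k.factorial * g (k + 1) := by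
  have h := factorial_mul_lt_integral_of_tangent_lt k (g := fun u => -g u) (-c)
    (by simp only [mul_neg]; exact hint.fun_neg) (fun u hu hne => by linarith [htan u hu hne])
  simp only [mul_neg, integral_neg] at h
  linarith

lemma one_div_sqrt_tangent_lt {x a u : ℝ} (ha : 0 < x ^ 2 + a) (hu : 0 < x ^ 2 + u)
    (hne : u ≠ a) :
    1 / √(x ^ 2 + a) - 1 / (2 * √(x ^ 2 + a) ^ 3) * (u - a) < 1 / √(x ^ 2 + u) := by
  have hs := sqrt_pos.2 hu
  have hs2 := sq_sqrt hu.le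
  have ht := sqrt_pos.2 ha
  have ht2 := sq_sqrt ha.le
  generalize √(x ^ 2 + u) = s at hs hs2 ⊢
  generalize √(x ^ 2 + a) = t at ht ht2 ⊢
  have hst : s ≠ t := by rintro rfl; exact hne (by linarith)
  rw [← sub_pos]
  have key : 1 / s - (1 / t - 1 / (2 * t ^ 3) * (u - a))
      = (s - t) ^ 2 * (s + 2 * t) / (2 * t ^ 3 * s) := by
    rw [show u - a = s ^ 2 - t ^ 2 by linarith]
    field_simp
    ring
  rw [key]
  have := sub_ne_zero.2 hst
  positivity

lemma div_sqrt_lt_tangent {x a u : ℝ} (ha : 0 < x ^ 2 + a) (hu : 0 < x ^ 2 + u) (hne : u ≠ a) :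
    u / √(x ^ 2 + u) < a / √(x ^ 2 + a) + (2 * x ^ 2 + a) / (2 * √(x ^ 2 + a) ^ 3) * (u - a) := by
  have hs := sqrt_pos.2 hu
  have hs2 := sq_sqrt hu.le
  have ht := sqrt_pos.2 ha
  have ht2 := sq_sqrt ha.le
  generalize √(x ^ 2 + u) = s at hs hs2 ⊢
  generalize √(x ^ 2 + a) = t at ht ht2 ⊢
  have hst : s ≠ t := by rintro rfl; exact hne (by linarith)
  rw [← sub_pos]
  have key : a / t + (2 * x ^ 2 + a) / (2 * t ^ 3) * (u - a) - u / s
      = (s - t) ^ 2 * (t ^ 2 * s + x ^ 2 * (s + 2 * t)) / (2 * t ^ 3 * s) := by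
    rw [show u = s ^ 2 - x ^ 2 by linarith, show a = t ^ 2 - x ^ 2 by linarith]
    field_simp
    ring
  rw [key]
  have := sub_ne_zero.2 hst
  positivity

lemma div_sqrt_le_one_add (x : ℝ) {u : ℝ} (hu : 0 < u) : u / √(x ^ 2 + u) ≤ 1 + u := by
  calc u / √(x ^ 2 + u) ≤ u / √u := by gcongr; linarith [sq_nonneg x]
    _ = √u := div_sqrt
    _ ≤ 1 + u := by nlinarith [sq_sqrt hu.le, sq_nonneg (√u - 1)]

lemma abs_lt_sqrt_sq_add (x : ℝ) {u : ℝ} (hu : 0 < u) : |x| < √(x ^ 2 + u) :=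
  (lt_sqrt (abs_nonneg x)).2 (by rw [sq_abs]; linarith)

lemma integrableOn_pow_mul_exp_neg_div_sqrt (k : ℕ) {x : ℝ} (hx : x ≠ 0) :
    IntegrableOn (fun u : ℝ => u ^ k * exp (-u) / √(x ^ 2 + u)) (Ioi 0) := by
  simp only [← mul_one_div (_ * _)]
  refine integrableOn_pow_mul_exp_neg_mul k (1 / |x|) (by fun_prop) fun u hu => ?_
  have hu : (0 : ℝ) < u := hu
  rw [abs_of_pos (by positivity)]
  calc 1 / √(x ^ 2 + u) ≤ 1 / |x| := by
        gcongr
        exact (abs_lt_sqrt_sq_add x hu).le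
    _ ≤ 1 / |x| * (1 + u) := le_mul_of_one_le_right (by positivity) (by linarith)

lemma pow_succ_mul_exp_neg_div_sqrt (k : ℕ) (x : ℝ) :
    (fun u : ℝ => u ^ (k + 1) * exp (-u) / √(x ^ 2 + u))
      = fun u => u ^ k * exp (-u) * (u / √(x ^ 2 + u)) := by
  funext u
  ring

lemma integrableOn_pow_mul_exp_neg_mul_div_sqrt (k : ℕ) (x : ℝ) :
    IntegrableOn (fun u : ℝ => u ^ k * exp (-u) * (u / √(x ^ 2 + u))) (Ioi 0) :=
  integrableOn_pow_mul_exp_neg_mul k 1 (by fun_prop) fun u hu => by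
    have hu : (0 : ℝ) < u := hu
    rw [abs_of_pos (by positivity), one_mul]
    exact div_sqrt_le_one_add x hu

lemma one_div_sqrt_lt_Vm (m : ℕ) (x : ℝ)
    (hint : IntegrableOn (fun u : ℝ => u ^ m * exp (-u) / √(x ^ 2 + u)) (Ioi 0)) :
    1 / √(x ^ 2 + m + 1) < Vm m x := by
  simp only [← mul_one_div (_ * _)] at hint
  have h := factorial_mul_lt_integral_of_tangent_lt m (g := fun u => 1 / √(x ^ 2 + u))
    (-(1 / (2 * √(x ^ 2 + (m + 1)) ^ 3))) hint fun u hu hne => by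
      rw [neg_mul, ← sub_eq_add_neg]
      exact one_div_sqrt_tangent_lt (by positivity) (by positivity) hne
  rw [Vm, add_assoc, one_div_mul_eq_div, lt_div_iff₀ (by positivity), mul_comm]
  simpa only [mul_one_div] using h

lemma Vm_succ_lt (k : ℕ) (x : ℝ) : Vm (k + 1) x < 1 / √(x ^ 2 + (k + 1)) := by
  have h := integral_lt_factorial_mul_of_lt_tangent k (g := fun u => u / √(x ^ 2 + u))
    ((2 * x ^ 2 + (k + 1)) / (2 * √(x ^ 2 + (k + 1)) ^ 3))
    (integrableOn_pow_mul_exp_neg_mul_div_sqrt k x)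
    fun u hu hne => div_sqrt_lt_tangent (by positivity) (by positivity) hne
  rw [Vm, pow_succ_mul_exp_neg_div_sqrt, one_div_mul_eq_div, div_lt_iff₀ (by positivity)]
  calc _ < (k.factorial : ℝ) * ((k + 1) / √(x ^ 2 + (k + 1))) := h
    _ = _ := by push_cast [Nat.factorial_succ]; ring

lemma Vm_zero_lt {x : ℝ} (hx : x ≠ 0) : Vm 0 x < 1 / |x| := by
  have hlt : ∀ u ∈ Ioi (0 : ℝ),
      u ^ 0 * exp (-u) / √(x ^ 2 + u) < u ^ 0 * exp (-u) * (1 / |x|) := fun u hu => by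
    rw [mul_one_div]
    exact div_lt_div_of_pos_left (by positivity) (abs_pos.2 hx) (abs_lt_sqrt_sq_add x hu)
  have h := setIntegral_lt_setIntegral_of_le_of_lt measurableSet_Ioi
    (integrableOn_pow_mul_exp_neg_div_sqrt 0 hx) ((integrableOn_pow_mul_exp_neg 0).mul_const _)
    (fun u hu => (hlt u hu).le) subset_rfl (by simp) hlt
  rw [Vm, Nat.factorial_zero, Nat.cast_one, one_div_one, one_mul]
  calc _ < _ := h
    _ = 1 / |x| := by rw [integral_mul_const, integral_pow_mul_exp_neg]; simp

/-- For `m ≥ 1` and every `x`: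
`(x² + m)^{−1/2} > V_m(x) > (x² + m + 1)^{−1/2}`; and for `m = 0` and `x ≠ 0`:
`1/|x| > V_0(x) > (x² + 1)^{−1/2}`. -/
theorem Vm_sqrt_bounds (m : ℕ) :
    (1 ≤ m → ∀ x : ℝ,
      Vm m x < 1 / Real.sqrt (x ^ 2 + m) ∧ 1 / Real.sqrt (x ^ 2 + m + 1) < Vm m x) ∧
    (∀ x : ℝ, x ≠ 0 →
      Vm 0 x < 1 / |x| ∧ 1 / Real.sqrt (x ^ 2 + 1) < Vm 0 x) := by
  refine ⟨fun hm x => ?_, fun x hx => ⟨Vm_zero_lt hx, ?_⟩⟩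
  · obtain ⟨k, rfl⟩ := Nat.exists_eq_add_of_le' hm
    refine ⟨by exact_mod_cast Vm_succ_lt k x, one_div_sqrt_lt_Vm _ x ?_⟩
    rw [pow_succ_mul_exp_neg_div_sqrt]
    exact integrableOn_pow_mul_exp_neg_mul_div_sqrt k x
  · simpa using one_div_sqrt_lt_Vm 0 x (integrableOn_pow_mul_exp_neg_div_sqrt 0 hx)
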